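/- Propositional Beth definability theorem: Let Σ be a propositional formula over atoms α, let p : α be an atom, and let I ⊆ α be a set of atoms. Suppose that any two valuations v, v' satisfying Σ that agree on all atoms in I also agree on p (implicit definability). Then there exists a propositional formula θ with atoms θ ⊆ I such that for every valuation v satisfying Σ, v p = eval v θ (explicit definability). -/
import Mathlib


inductive PForm (α : Type*) : Type _
  | atom : α → PForm α
  | tru : PForm α
  | fls : PForm α
  | not : PForm α → PForm α
  | and : PForm α → PForm α → PForm α
  | or : PForm α → PForm α → PForm α

def PForm.eval {α : Type*} (v : α → Bool) : PForm α → Bool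
  | .atom a => v a
  | .tru => true
  | .fls => false
  | .not φ => !(φ.eval v)
  | .and φ ψ => φ.eval v && ψ.eval v
  | .or φ ψ => φ.eval v || ψ.eval v

def PForm.atoms {α : Type*} : PForm α → Set α
  | .atom a => {a}
  | .tru => ∅
  | .fls => ∅
  | .not φ => φ.atoms
  | .and φ ψ => φ.atoms ∪ ψ.atoms
  | .or φ ψ => φ.atoms ∪ ψ.atoms

namespace PForm

variable {α : Type*}

def atomList : PForm α → List α
  | .atom a => [a]
  | .tru => []
  | .fls => []
  | .not φ => φ.atomList
  | .and φ ψ => φ.atomList ++ ψ.atomList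
  | .or φ ψ => φ.atomList ++ ψ.atomList

theorem mem_atomList {a : α} : ∀ {φ : PForm α}, a ∈ φ.atoms ↔ a ∈ φ.atomList := by
  intro φ
  induction φ <;> simp [atoms, atomList, *]

theorem eval_congr : ∀ (φ : PForm α) (v v' : α → Bool),
    (∀ x ∈ φ.atoms, v x = v' x) → φ.eval v = φ.eval v'
  | .atom a, v, v', h => h a rfl
  | .tru, _, _, _ => rfl
  | .fls, _, _, _ => rfl
  | .not φ, v, v', h => by simp [eval, eval_congr φ v v' h]
  | .and φ ψ, v, v', h => by
      simp [eval, eval_congr φ v v' (fun x hx => h x (Set.mem_union_left _ hx)),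
        eval_congr ψ v v' (fun x hx => h x (Set.mem_union_right _ hx))]
  | .or φ ψ, v, v', h => by
      simp [eval, eval_congr φ v v' (fun x hx => h x (Set.mem_union_left _ hx)),
        eval_congr ψ v v' (fun x hx => h x (Set.mem_union_right _ hx))]

def conjList (w : α → Bool) : List α → PForm α
  | [] => .tru
  | x :: l => .and (if w x then .atom x else .not (.atom x)) (conjList w l)

theorem atoms_conjList (w : α → Bool) : ∀ l : List α, (conjList w l).atoms ⊆ {x | x ∈ l}
  | [] => by simp [conjList, atoms]
  | x :: l => by
      intro y hy
      rcases hy with hy | hy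
      · by_cases hw : w x <;> simp [hw, atoms] at hy <;> simp [hy]
      · have := atoms_conjList w l hy
        simp at this ⊢
        exact Or.inr this

theorem eval_conjList (w v : α → Bool) :
    ∀ l : List α, ((conjList w l).eval v = true ↔ ∀ x ∈ l, v x = w x)
  | [] => by simp [conjList, eval]
  | x :: l => by
      by_cases hw : w x <;>
        simp [conjList, eval, hw, eval_conjList w v l]

def disjList : List (PForm α) → PForm α
  | [] => .fls
  | φ :: l => .or φ (disjList l)

theorem atoms_disjList : ∀ l : List (PForm α), ∀ x ∈ (disjList l).atoms, ∃ φ ∈ l, x ∈ φ.atoms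
  | [] => by simp [disjList, atoms]
  | φ :: l => by
      intro x hx
      rcases hx with hx | hx
      · exact ⟨φ, by simp, hx⟩
      · obtain ⟨ψ, hψ, hxψ⟩ := atoms_disjList l x hx
        exact ⟨ψ, by simp [hψ], hxψ⟩

theorem eval_disjList (v : α → Bool) :
    ∀ l : List (PForm α), ((disjList l).eval v = true ↔ ∃ φ ∈ l, φ.eval v = true)
  | [] => by simp [disjList, eval]
  | φ :: l => by
      simp [disjList, eval, eval_disjList v l]

open Classical in
noncomputable def funcs : List α → List (α → Bool)
  | [] => [fun _ => false]
  | x :: l => (funcs l).flatMap fun w => [fun y => if y = x then true else w y,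
      fun y => if y = x then false else w y]

theorem funcs_exists (w : α → Bool) : ∀ l : List α, ∃ w' ∈ funcs l, ∀ x ∈ l, w' x = w x
  | [] => ⟨fun _ => false, by simp [funcs], by simp⟩
  | x :: l => by
      classical
      obtain ⟨w', hw', hagree⟩ := funcs_exists w l
      refine ⟨fun y => if y = x then w x else w' y, ?_, ?_⟩
      · simp only [funcs, List.mem_flatMap]
        refine ⟨w', hw', ?_⟩
        by_cases hwx : w x <;> simp [hwx]
      · intro y hy
        by_cases hyx : y = x
        · simp [hyx]
        · simp only [if_neg hyx]
          exact hagree y ((List.mem_cons.1 hy).resolve_left hyx)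

end PForm

theorem propositional_beth {α : Type*} (Sigma : PForm α) (p : α) (I : Set α)
    (himp : ∀ v v' : α → Bool, Sigma.eval v = true → Sigma.eval v' = true →
      (∀ x ∈ I, v x = v' x) → v p = v' p) :
    ∃ θ : PForm α, θ.atoms ⊆ I ∧
      ∀ v : α → Bool, Sigma.eval v = true → v p = θ.eval v := by
  classical
  by_cases hp : p ∈ I
  · exact ⟨.atom p, by simp [PForm.atoms, hp], fun v _ => rfl⟩
  · -- L : atoms of Sigma that lie in I
    set L : List α := Sigma.atomList.filter (fun x => decide (x ∈ I)) with hL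
    have hLmem : ∀ x, x ∈ L ↔ x ∈ Sigma.atoms ∧ x ∈ I := by
      intro x
      simp [hL, List.mem_filter, ← PForm.mem_atomList]
    -- Good w : w (restricted to L) extends to a model of Sigma making p true
    set Good : (α → Bool) → Prop :=
      fun w => ∃ v, Sigma.eval v = true ∧ v p = true ∧ ∀ x ∈ L, v x = w x with hGood
    set θ : PForm α :=
      PForm.disjList (((PForm.funcs L).filter (fun w => decide (Good w))).map
        (fun w => PForm.conjList w L)) with hθ
    refine ⟨θ, ?_, ?_⟩
    · intro x hx
      obtain ⟨φ, hφ, hxφ⟩ := PForm.atoms_disjList _ x hx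
      simp only [List.mem_map, List.mem_filter] at hφ
      obtain ⟨w, _, rfl⟩ := hφ
      have := PForm.atoms_conjList w L hxφ
      exact ((hLmem x).1 this).2
    · intro v hv
      have key : θ.eval v = true ↔ v p = true := by
        rw [hθ, PForm.eval_disjList]
        constructor
        · rintro ⟨φ, hφ, hφv⟩
          simp only [List.mem_map, List.mem_filter] at hφ
          obtain ⟨w, ⟨hwfuncs, hwgood⟩, rfl⟩ := hφ
          have hgood : Good w := by simpa using hwgood
          obtain ⟨v', hv', hv'p, hv'w⟩ := hgood
          have hvw : ∀ x ∈ L, v x = w x := (PForm.eval_conjList w v L).1 hφv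
          -- v'' agrees with v on I and with v' on atoms of Sigma
          set v'' : α → Bool := fun x => if x ∈ I then v x else v' x with hv''
          have hv''Sigma : Sigma.eval v'' = true := by
            rw [PForm.eval_congr Sigma v'' v' ?_]
            · exact hv'
            · intro x hx
              by_cases hxI : x ∈ I
              · have hxL : x ∈ L := (hLmem x).2 ⟨hx, hxI⟩
                simp [hv'', hxI, (hvw x hxL).trans (hv'w x hxL).symm]
              · simp [hv'', hxI]
          have hv''p : v'' p = v' p := by simp [hv'', hp]
          have := himp v v'' hv hv''Sigma (fun x hx => by simp [hv'', hx])
          rw [this, hv''p, hv'p]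
        · intro hvp
          obtain ⟨w, hwfuncs, hwv⟩ := PForm.funcs_exists v L
          refine ⟨PForm.conjList w L, ?_, ?_⟩
          · simp only [List.mem_map, List.mem_filter]
            refine ⟨w, ⟨hwfuncs, ?_⟩, rfl⟩
            simp only [decide_eq_true_eq]
            exact ⟨v, hv, hvp, fun x hx => (hwv x hx).symm⟩
          · exact (PForm.eval_conjList w v L).2 (fun x hx => (hwv x hx).symm)
      cases hvp : v p with
      | true => exact (key.2 hvp).symm
      | false =>
        cases hθv : θ.eval v with
        | true => rw [← hvp, key.1 hθv]
        | false => rfl
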